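/- Let m ≥ 1 and n = 2m+1, and let C_0(n) be the fat parity class (the class of points with x + y even). Suppose nonnegative reals a_0,…,a_m and b_0,…,b_m satisfy a_u + a_{m−v} + b_{u+v} + b_{u−v} ≥ 1 for all integers u, v with 0 ≤ v ≤ u and u + v ≤ m. Then every no-three-in-line set S ⊆ C_0(n) satisfies |S| ≤ 8·Σ_{i=0}^{m−1}(a_i + b_i) + 4(a_m + b_m). -/

import Mathlib

/-- The `n × n` integer grid `G_n = {0,…,n−1} × {0,…,n−1} ⊆ ℤ²`. -/
noncomputable def grid (n : ℕ) : Finset (ℤ × ℤ) :=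
  Finset.Icc (0 : ℤ) ((n : ℤ) - 1) ×ˢ Finset.Icc (0 : ℤ) ((n : ℤ) - 1)

/-- The parity (checkerboard) class `C_ε(n) = {(x,y) ∈ G_n : x + y ≡ ε (mod 2)}`. -/
noncomputable def gridClass (n : ℕ) (ε : ℕ) : Finset (ℤ × ℤ) :=
  (grid n).filter (fun P => (P.1 + P.2) % 2 = (ε : ℤ))

/-- Three points of `ℤ²` are collinear. -/
def Collinear3 (P Q R : ℤ × ℤ) : Prop :=
  (Q.1 - P.1) * (R.2 - P.2) = (R.1 - P.1) * (Q.2 - P.2)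

/-- A finite set is no-three-in-line if no three distinct points of it are collinear. -/
def NTIL (S : Finset (ℤ × ℤ)) : Prop :=
  ∀ P ∈ S, ∀ Q ∈ S, ∀ R ∈ S, P ≠ Q → P ≠ R → Q ≠ R → ¬ Collinear3 P Q R

/-!
Give the row or column with index `j ∈ {0, …, 2m}` the weight `b (min j (2m - j))`, and
likewise the diagonal or antidiagonal with index `j` the weight `a (min j (2m - j))`. The dual
constraints say exactly that the four lines through every point of the fat class carry total
weight at least `1`, so `|S|` is at most the sum over all lines of weight times the number of
points of `S` on the line. A no-three-in-line set meets each line at most twice, and each of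
the four line families has two lines of every weight index `i < m` and one of index `m`.
-/

open Finset

lemma collinear3_of_linear_eq {p q : ℤ} (hpq : p ≠ 0 ∨ q ≠ 0) {P Q R : ℤ × ℤ}
    (hQ : p * P.1 + q * P.2 = p * Q.1 + q * Q.2) (hR : p * P.1 + q * P.2 = p * R.1 + q * R.2) :
    Collinear3 P Q R := by
  rw [Collinear3, ← sub_eq_zero]
  have hp : p * ((Q.1 - P.1) * (R.2 - P.2) - (R.1 - P.1) * (Q.2 - P.2)) = 0 := by
    linear_combination (Q.2 - P.2) * hR - (R.2 - P.2) * hQ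
  have hq : q * ((Q.1 - P.1) * (R.2 - P.2) - (R.1 - P.1) * (Q.2 - P.2)) = 0 := by
    linear_combination (R.1 - P.1) * hQ - (Q.1 - P.1) * hR
  rcases hpq with hp0 | hq0
  · exact (mul_eq_zero.mp hp).resolve_left hp0
  · exact (mul_eq_zero.mp hq).resolve_left hq0

lemma NTIL.card_filter_le_two {S : Finset (ℤ × ℤ)} (hS : NTIL S) {p q : ℤ} (hpq : p ≠ 0 ∨ q ≠ 0)
    {β : Type*} [DecidableEq β] {g : ℤ × ℤ → β}
    (hg : ∀ P ∈ S, ∀ Q ∈ S, g P = g Q → p * P.1 + q * P.2 = p * Q.1 + q * Q.2) (s : β) :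
    #{P ∈ S | g P = s} ≤ 2 := by
  by_contra! h
  obtain ⟨P, hP, Q, hQ, R, hR, hPQ, hPR, hQR⟩ := two_lt_card.mp h
  rw [mem_filter] at hP hQ hR
  exact hS P hP.1 Q hQ.1 R hR.1 hPQ hPR hQR <| collinear3_of_linear_eq hpq
    (hg P hP.1 Q hQ.1 (hP.2.trans hQ.2.symm)) (hg P hP.1 R hR.1 (hP.2.trans hR.2.symm))

lemma sum_comp_le_mul_sum_of_maps_to {ι κ R : Type*} [DecidableEq κ] [CommSemiring R]
    [PartialOrder R] [IsOrderedRing R] {s : Finset ι} {t : Finset κ} {g : ι → κ} {f : κ → R}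
    (hg : ∀ i ∈ s, g i ∈ t) (k : ℕ) (hk : ∀ j ∈ t, #{i ∈ s | g i = j} ≤ k)
    (hf : ∀ j ∈ t, 0 ≤ f j) :
    ∑ i ∈ s, f (g i) ≤ k * ∑ j ∈ t, f j := by
  rw [mul_sum, ← sum_fiberwise_of_maps_to hg]
  refine sum_le_sum fun j hj => ?_
  rw [sum_congr rfl fun i hi => congrArg f (mem_filter.mp hi).2, sum_const, nsmul_eq_mul]
  exact mul_le_mul_of_nonneg_right (Nat.mono_cast (hk j hj)) (hf j hj)

def edgeDist (m j : ℕ) : ℕ := min j (2 * m - j)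

lemma edgeDist_le (m j : ℕ) : edgeDist m j ≤ m := by
  unfold edgeDist; omega

lemma sum_range_edgeDist {M : Type*} [AddCommMonoid M] (m : ℕ) (c : ℕ → M) :
    ∑ j ∈ range (2 * m + 1), c (edgeDist m j) = 2 • ∑ i ∈ range m, c i + c m := by
  have hleft : ∑ j ∈ range m, c (edgeDist m j) = ∑ i ∈ range m, c i :=
    sum_congr rfl fun j hj => by rw [mem_range] at hj; congr 1; unfold edgeDist; omega
  have hright : ∑ j ∈ range m, c (edgeDist m (m + 1 + j)) = ∑ i ∈ range m, c i := by
    rw [← sum_range_reflect]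
    exact sum_congr rfl fun j hj => by rw [mem_range] at hj; congr 1; unfold edgeDist; omega
  have hmid : edgeDist m m = m := by unfold edgeDist; omega
  rw [show 2 * m + 1 = (m + 1) + m by ring, sum_range_add, sum_range_succ, hleft, hright, hmid,
    two_nsmul]
  abel

lemma NTIL.sum_edgeDist_le {S : Finset (ℤ × ℤ)} (hS : NTIL S) {p q : ℤ} (hpq : p ≠ 0 ∨ q ≠ 0)
    {m : ℕ} {w : ℕ → ℝ} (hw : ∀ i ≤ m, 0 ≤ w i) {g : ℤ × ℤ → ℕ} (hg_le : ∀ P ∈ S, g P ≤ 2 * m)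
    (hg : ∀ P ∈ S, ∀ Q ∈ S, g P = g Q → p * P.1 + q * P.2 = p * Q.1 + q * Q.2) :
    ∑ P ∈ S, w (edgeDist m (g P)) ≤ 2 * (2 * ∑ i ∈ range m, w i + w m) := by
  calc ∑ P ∈ S, w (edgeDist m (g P))
      ≤ (2 : ℕ) * ∑ j ∈ range (2 * m + 1), w (edgeDist m j) :=
        sum_comp_le_mul_sum_of_maps_to (f := fun j => w (edgeDist m j))
          (fun P hP => mem_range.mpr (Nat.lt_succ_of_le (hg_le P hP))) 2
          (fun j _ => hS.card_filter_le_two hpq hg j) (fun j _ => hw _ (edgeDist_le m j))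
    _ = 2 * (2 * ∑ i ∈ range m, w i + w m) := by
        rw [sum_range_edgeDist, nsmul_eq_mul]; push_cast; ring

lemma mem_gridClass {n ε : ℕ} {P : ℤ × ℤ} :
    P ∈ gridClass n ε ↔ (0 ≤ P.1 ∧ P.1 < n) ∧ (0 ≤ P.2 ∧ P.2 < n) ∧ (P.1 + P.2) % 2 = ε := by
  simp only [gridClass, grid, mem_filter, mem_product, mem_Icc]
  omega

/- On the fat class, the diagonal `x + y = 2j` and the antidiagonal `x - y = 2(j - m)` both
have index `j`. -/
def diagIndex (P : ℤ × ℤ) : ℕ := ((P.1 + P.2) / 2).toNat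
def antidiagIndex (m : ℕ) (P : ℤ × ℤ) : ℕ := ((P.1 - P.2) / 2 + m).toNat

section DualWeights

variable {m : ℕ} {a b : ℕ → ℝ}
  (hcon : ∀ u v : ℕ, v ≤ u → u + v ≤ m → 1 ≤ a u + a (m - v) + b (u + v) + b (u - v))
include hcon

lemma one_le_of_dual_feasible {u v : ℕ} (hvu : v ≤ u) (huv : u + v ≤ m) {i j k l : ℕ}
    (hij : i = u ∧ j = m - v ∨ i = m - v ∧ j = u)
    (hkl : k = u + v ∧ l = u - v ∨ k = u - v ∧ l = u + v) :
    1 ≤ a i + a j + b k + b l := by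
  have := hcon u v hvu huv
  rcases hij with ⟨rfl, rfl⟩ | ⟨rfl, rfl⟩ <;> rcases hkl with ⟨rfl, rfl⟩ | ⟨rfl, rfl⟩ <;> linarith

/-- `σ` and `τ` are the offsets of a diagonal and an antidiagonal from the centre; the row and
column through their intersection have offsets `σ + τ` and `σ - τ`. -/
lemma one_le_weights_of_offsets (σ τ : ℤ) (h : σ.natAbs + τ.natAbs ≤ m) :
    1 ≤ a (m - σ.natAbs) + a (m - τ.natAbs) + b (m - (σ + τ).natAbs) + b (m - (σ - τ).natAbs) :=
  one_le_of_dual_feasible hcon (u := m - max σ.natAbs τ.natAbs) (v := min σ.natAbs τ.natAbs)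
    (by omega) (by omega) (by omega) (by omega)

lemma one_le_weights_of_mem_gridClass {P : ℤ × ℤ} (hP : P ∈ gridClass (2 * m + 1) 0) :
    1 ≤ a (edgeDist m (diagIndex P)) + a (edgeDist m (antidiagIndex m P))
      + b (edgeDist m P.1.toNat) + b (edgeDist m P.2.toNat) := by
  rw [mem_gridClass] at hP
  obtain ⟨⟨hx0, hx⟩, ⟨hy0, hy⟩, hxy⟩ := hP
  set σ := (P.1 + P.2) / 2 - m with hσ
  set τ := (P.1 - P.2) / 2 with hτ
  have hdiag : edgeDist m (diagIndex P) = m - σ.natAbs := by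
    simp only [edgeDist, diagIndex]; omega
  have hanti : edgeDist m (antidiagIndex m P) = m - τ.natAbs := by
    simp only [edgeDist, antidiagIndex]; omega
  have hrow : edgeDist m P.1.toNat = m - (σ + τ).natAbs := by
    simp only [edgeDist]; omega
  have hcol : edgeDist m P.2.toNat = m - (σ - τ).natAbs := by
    simp only [edgeDist]; omega
  rw [hdiag, hanti, hrow, hcol]
  exact one_le_weights_of_offsets hcon σ τ (by omega)

end DualWeights

theorem odd_fat_reduced_dual_bound_general (m : ℕ) (a b : ℕ → ℝ)
    (ha : ∀ i ≤ m, 0 ≤ a i) (hb : ∀ i ≤ m, 0 ≤ b i)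
    (hcon : ∀ u v : ℕ, v ≤ u → u + v ≤ m →
      1 ≤ a u + a (m - v) + b (u + v) + b (u - v))
    (S : Finset (ℤ × ℤ)) (hS : S ⊆ gridClass (2 * m + 1) 0) (hNTIL : NTIL S) :
    (S.card : ℝ) ≤ 8 * (∑ i ∈ Finset.range m, (a i + b i)) + 4 * (a m + b m) := by
  have hmem := fun P (hP : P ∈ S) => mem_gridClass.mp (hS hP)
  calc (S.card : ℝ) = ∑ P ∈ S, (1 : ℝ) := by simp
    _ ≤ ∑ P ∈ S, (a (edgeDist m (diagIndex P)) + a (edgeDist m (antidiagIndex m P))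
          + b (edgeDist m P.1.toNat) + b (edgeDist m P.2.toNat)) :=
        sum_le_sum fun P hP => one_le_weights_of_mem_gridClass hcon (hS hP)
    _ = ∑ P ∈ S, a (edgeDist m (diagIndex P)) + ∑ P ∈ S, a (edgeDist m (antidiagIndex m P))
          + ∑ P ∈ S, b (edgeDist m P.1.toNat) + ∑ P ∈ S, b (edgeDist m P.2.toNat) := by
        simp only [sum_add_distrib]
    _ ≤ 2 * (2 * ∑ i ∈ range m, a i + a m) + 2 * (2 * ∑ i ∈ range m, a i + a m)
          + 2 * (2 * ∑ i ∈ range m, b i + b m) + 2 * (2 * ∑ i ∈ range m, b i + b m) := by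
        gcongr ?_ + ?_ + ?_ + ?_
        · exact hNTIL.sum_edgeDist_le (p := 1) (q := 1) (by simp) ha
            (fun P hP => by have := hmem P hP; unfold diagIndex; omega)
            (fun P hP Q hQ h => by
              have := hmem P hP; have := hmem Q hQ; unfold diagIndex at h; omega)
        · exact hNTIL.sum_edgeDist_le (p := 1) (q := -1) (by simp) ha
            (fun P hP => by have := hmem P hP; unfold antidiagIndex; omega)
            (fun P hP Q hQ h => by
              have := hmem P hP; have := hmem Q hQ; unfold antidiagIndex at h; omega)
        · exact hNTIL.sum_edgeDist_le (p := 1) (q := 0) (by simp) hb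
            (fun P hP => by have := hmem P hP; omega)
            (fun P hP Q hQ h => by have := hmem P hP; have := hmem Q hQ; omega)
        · exact hNTIL.sum_edgeDist_le (p := 0) (q := 1) (by simp) hb
            (fun P hP => by have := hmem P hP; omega)
            (fun P hP Q hQ h => by have := hmem P hP; have := hmem Q hQ; omega)
    _ = 8 * (∑ i ∈ Finset.range m, (a i + b i)) + 4 * (a m + b m) := by
        rw [sum_add_distrib]; ring

/-- Odd side length `n = 2m+1`, fat class: a feasible symmetry-reduced dual weighting
bounds every no-three-in-line subset of the fat parity class `C_0(2m+1)`. -/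
theorem odd_fat_reduced_dual_bound (m : ℕ) (hm : 1 ≤ m) (a b : ℕ → ℝ)
    (ha : ∀ i ≤ m, 0 ≤ a i) (hb : ∀ i ≤ m, 0 ≤ b i)
    (hcon : ∀ u v : ℕ, v ≤ u → u + v ≤ m →
      1 ≤ a u + a (m - v) + b (u + v) + b (u - v))
    (S : Finset (ℤ × ℤ)) (hS : S ⊆ gridClass (2 * m + 1) 0) (hNTIL : NTIL S) :
    (S.card : ℝ) ≤ 8 * (∑ i ∈ Finset.range m, (a i + b i)) + 4 * (a m + b m) :=
  odd_fat_reduced_dual_bound_general m a b ha hb hcon S hS hNTIL
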